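/- arXiv:alg-geom/9609004 — 2 statements merged into one kernel-verified Lean document; each statement's English description precedes it below -/
import Mathlib

section
/- Let q ∈ ℝ[X] be a squarefree polynomial of degree D. Then each real root u of q is uniquely determined among the real roots of q by the sign sequence (sign(q'(u)), sign(q''(u)), …, sign(q^{(D-1)}(u))) ∈ {−1,0,1}^{D−1}. -/
open Polynomial

private lemma sign_between {a b c : ℝ} (h1 : a ≤ b) (h2 : b ≤ c)
    (h : SignType.sign a = SignType.sign c) : SignType.sign b = SignType.sign a := by
  rcases lt_trichotomy a 0 with ha | ha | ha
  · have hc : c < 0 := by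
      have := h.symm
      rw [(sign_eq_neg_one_iff).mpr ha] at this
      exact sign_eq_neg_one_iff.mp this
    exact ((sign_eq_neg_one_iff).mpr (lt_of_le_of_lt h2 hc)).trans
      ((sign_eq_neg_one_iff).mpr ha).symm
  · subst ha
    have hc : c = 0 := by
      have := h.symm
      rw [sign_zero] at this
      exact sign_eq_zero_iff.mp this
    have hb : b = 0 := le_antisymm (hc ▸ h2) h1
    rw [hb]
  · exact ((sign_eq_one_iff).mpr (lt_of_lt_of_le ha h1)).trans
      ((sign_eq_one_iff).mpr ha).symm

private lemma thom_aux : ∀ (n : ℕ) (p : Polynomial ℝ), p.natDegree ≤ n + 1 →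
    ∀ u v : ℝ, u < v →
    (∀ k : ℕ, 1 ≤ k → k ≤ n → SignType.sign ((derivative^[k] p).eval u)
        = SignType.sign ((derivative^[k] p).eval v)) →
    ∀ x ∈ Set.Icc u v, ∀ k : ℕ, 1 ≤ k → k ≤ n →
      SignType.sign ((derivative^[k] p).eval x) = SignType.sign ((derivative^[k] p).eval u) := by
  intro n
  induction n with
  | zero => intro p _ u v _ _ x _ k hk1 hk0; omega
  | succ n IH =>
    intro p hdeg u v huv hs x hx k hk1 hkn
    -- apply IH to derivative p
    have hdeg' : (derivative p).natDegree ≤ n + 1 := by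
      have := natDegree_derivative_le p
      omega
    have hs' : ∀ k : ℕ, 1 ≤ k → k ≤ n →
        SignType.sign ((derivative^[k] (derivative p)).eval u)
          = SignType.sign ((derivative^[k] (derivative p)).eval v) := by
      intro k h1 h2
      rw [← Function.iterate_succ_apply]
      exact hs (k+1) (by omega) (by omega)
    have IH' := IH (derivative p) hdeg' u v huv hs'
    rcases Nat.lt_or_ge 1 k with hk2 | hk2
    · -- k ≥ 2
      obtain ⟨k', rfl⟩ : ∃ k', k = k' + 1 := ⟨k - 1, by omega⟩
      simp only [Function.iterate_succ_apply]
      exact IH' x hx k' (by omega) (by omega)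
    · -- k = 1
      have hk : k = 1 := by omega
      subst hk
      -- sign of second derivative is constant on the interval
      have h2 : ∀ y ∈ Set.Icc u v,
          SignType.sign ((derivative^[2] p).eval y)
            = SignType.sign ((derivative^[2] p).eval u) := by
        rcases Nat.eq_zero_or_pos n with hn | hn
        · -- n = 0 : second derivative is constant
          subst hn
          have hd2 : (derivative^[2] p).natDegree = 0 := by
            have h1 := natDegree_derivative_le p
            have h2 := natDegree_derivative_le (derivative p)
            have : derivative^[2] p = derivative (derivative p) := by
              simp [Function.iterate_succ_apply]
            rw [this]
            omega
          obtain ⟨c, hc⟩ := natDegree_eq_zero.mp hd2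
          intro y _
          rw [← hc]; simp
        · intro y hy
          have := IH' y hy 1 le_rfl hn
          simpa [Function.iterate_succ_apply] using this
      have hderiv : ∀ y : ℝ, deriv (fun z => (derivative p).eval z) y
          = (derivative^[2] p).eval y := by
        intro y
        rw [Polynomial.deriv]
        simp [Function.iterate_succ_apply]
      have hcont : ContinuousOn (fun z => (derivative p).eval z) (Set.Icc u v) :=
        (Polynomial.continuous _).continuousOn
      have hdiff : DifferentiableOn ℝ (fun z => (derivative p).eval z)
          (interior (Set.Icc u v)) :=
        (Polynomial.differentiable _).differentiableOn
      have hsuv : SignType.sign ((derivative p).eval u) = SignType.sign ((derivative p).eval v) := by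
        simpa using hs 1 le_rfl (by omega)
      rcases le_or_gt 0 ((derivative^[2] p).eval u) with hpos | hneg
      · -- p' monotone on [u,v]
        have hmono : MonotoneOn (fun z => (derivative p).eval z) (Set.Icc u v) := by
          apply monotoneOn_of_deriv_nonneg (convex_Icc u v) hcont hdiff
          intro y hy
          rw [hderiv]
          have := h2 y (interior_subset hy)
          have h0 : (0 : SignType) ≤ SignType.sign ((derivative^[2] p).eval u) := by
            rcases lt_or_eq_of_le hpos with h | h
            · rw [sign_eq_one_iff.mpr h]; decide
            · rw [← h, sign_zero]
          rw [← this] at h0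
          exact sign_nonneg_iff.mp h0
        have hle1 : (derivative p).eval u ≤ (derivative p).eval x :=
          hmono (Set.left_mem_Icc.mpr huv.le) hx hx.1
        have hle2 : (derivative p).eval x ≤ (derivative p).eval v :=
          hmono hx (Set.right_mem_Icc.mpr huv.le) hx.2
        simpa using sign_between hle1 hle2 hsuv
      · -- p' antitone on [u,v]
        have hanti : AntitoneOn (fun z => (derivative p).eval z) (Set.Icc u v) := by
          apply antitoneOn_of_deriv_nonpos (convex_Icc u v) hcont hdiff
          intro y hy
          rw [hderiv]
          have := h2 y (interior_subset hy)
          have h0 : SignType.sign ((derivative^[2] p).eval u) ≤ 0 := by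
            rw [sign_eq_neg_one_iff.mpr hneg]; decide
          rw [← this] at h0
          exact sign_nonpos_iff.mp h0
        have hle1 : (derivative p).eval v ≤ (derivative p).eval x :=
          hanti hx (Set.right_mem_Icc.mpr huv.le) hx.2
        have hle2 : (derivative p).eval x ≤ (derivative p).eval u :=
          hanti (Set.left_mem_Icc.mpr huv.le) hx hx.1
        simpa using (sign_between hle1 hle2 hsuv.symm).trans hsuv.symm

private lemma thom_main (D : ℕ) (q : Polynomial ℝ) (hsf : Squarefree q) (hdeg : q.natDegree = D)
    (u v : ℝ) (hu : q.eval u = 0) (hv : q.eval v = 0) (huv : u < v)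
    (hsign : ∀ k : ℕ, 1 ≤ k → k ≤ D - 1 →
      SignType.sign ((Polynomial.derivative^[k] q).eval u) =
        SignType.sign ((Polynomial.derivative^[k] q).eval v)) : False := by
  have hq0 : q ≠ 0 := hsf.ne_zero
  rcases Nat.eq_zero_or_pos D with hD0 | hD1
  · subst hD0
    obtain ⟨c, hc⟩ := natDegree_eq_zero.mp hdeg
    rw [← hc] at hu hq0
    simp at hu
    simp [hu] at hq0
  -- derivative nonzero at roots
  have hsep : q.Separable := (PerfectField.separable_iff_squarefree).mpr hsf
  obtain ⟨a, b, hab⟩ := hsep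
  have hq'u : (derivative q).eval u ≠ 0 := by
    intro h
    have := congrArg (Polynomial.eval u) hab
    simp [hu, h] at this
  -- sign of q' is constant on [u,v]
  have hs1 : ∀ x ∈ Set.Icc u v,
      SignType.sign ((derivative q).eval x) = SignType.sign ((derivative q).eval u) := by
    rcases Nat.lt_or_ge D 2 with hD | hD
    · -- D = 1 : q' is constant
      have h1 : D = 1 := by omega
      have hd' : (derivative q).natDegree = 0 := by
        have := natDegree_derivative_le q
        omega
      obtain ⟨c, hc⟩ := natDegree_eq_zero.mp hd'
      intro x _
      rw [← hc]; simp
    · intro x hx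
      have := thom_aux (D - 1) q (by omega) u v huv
        (by intro k h1 h2; exact hsign k h1 h2) x hx 1 le_rfl (by omega)
      simpa using this
  have hcont : ContinuousOn (fun z => q.eval z) (Set.Icc u v) :=
    (Polynomial.continuous _).continuousOn
  have hdiff : ∀ y : ℝ, deriv (fun z => q.eval z) y = (derivative q).eval y := fun y =>
    Polynomial.deriv q
  rcases lt_trichotomy ((derivative q).eval u) 0 with hneg | h0 | hpos
  · have hanti : StrictAntiOn (fun z => q.eval z) (Set.Icc u v) := by
      apply strictAntiOn_of_deriv_neg (convex_Icc u v) hcont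
      intro y hy
      rw [interior_Icc] at hy
      rw [hdiff]
      have := hs1 y (Set.Ioo_subset_Icc_self hy)
      rw [sign_eq_neg_one_iff.mpr hneg] at this
      exact sign_eq_neg_one_iff.mp this
    have := hanti (Set.left_mem_Icc.mpr huv.le) (Set.right_mem_Icc.mpr huv.le) huv
    simp [hu, hv] at this
  · exact hq'u h0
  · have hmono : StrictMonoOn (fun z => q.eval z) (Set.Icc u v) := by
      apply strictMonoOn_of_deriv_pos (convex_Icc u v) hcont
      intro y hy
      rw [interior_Icc] at hy
      rw [hdiff]
      have := hs1 y (Set.Ioo_subset_Icc_self hy)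
      rw [sign_eq_one_iff.mpr hpos] at this
      exact sign_eq_one_iff.mp this
    have := hmono (Set.left_mem_Icc.mpr huv.le) (Set.right_mem_Icc.mpr huv.le) huv
    simp [hu, hv] at this

/-- Thom's lemma: a real root of a squarefree polynomial `q` of degree `D` is uniquely
determined among the real roots of `q` by the signs of the derivatives
`q'(u), q''(u), …, q^(D-1)(u)`. -/
theorem stmt15 (D : ℕ) (q : Polynomial ℝ) (hsf : Squarefree q) (hdeg : q.natDegree = D)
    (u v : ℝ) (hu : q.eval u = 0) (hv : q.eval v = 0)
    (hsign : ∀ k : ℕ, 1 ≤ k → k ≤ D - 1 →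
      SignType.sign ((Polynomial.derivative^[k] q).eval u) =
        SignType.sign ((Polynomial.derivative^[k] q).eval v)) :
    u = v := by
  rcases lt_trichotomy u v with h | h | h
  · exact absurd (thom_main D q hsf hdeg u v hu hv h hsign) not_false
  · exact h
  · exact absurd (thom_main D q hsf hdeg v u hv hu h
      (fun k h1 h2 => (hsign k h1 h2).symm)) not_false
end

section
/- Let f ∈ ℝ[X₁,…,Xₙ] with V = {f = 0} nonempty compact and ∇f ≠ 0 on V. Suppose W_{n-1}, the set of complex common zeros of f, ∂f/∂X₁, …, ∂f/∂X_{n-1} with Δ ≠ 0 (Zariski closure), is finite. Then W_{n-1} ∩ ℝⁿ is nonempty, and every connected component of V contains at least one point of W_{n-1} ∩ ℝⁿ. -/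
open MvPolynomial

/-- Zariski closure in affine n-space over ℂ. -/
noncomputable def zClosure {n : ℕ} (S : Set (Fin n → ℂ)) : Set (Fin n → ℂ) :=
  MvPolynomial.zeroLocus ℂ (MvPolynomial.vanishingIdeal ℂ S)

/-- A set is Zariski closed if it equals its Zariski closure. -/
def IsZClosed {n : ℕ} (S : Set (Fin n → ℂ)) : Prop := S = zClosure S

/-- Dimension of an affine algebraic set as Krull dimension of its coordinate ring. -/
noncomputable def cDim {n : ℕ} (S : Set (Fin n → ℂ)) : WithBot (WithTop ℕ) :=
  ringKrullDim (MvPolynomial (Fin n) ℂ ⧸ MvPolynomial.vanishingIdeal ℂ S)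

/-- Real dimension of a real algebraic set. -/
noncomputable def rDim {n : ℕ} (S : Set (Fin n → ℝ)) : WithBot (WithTop ℕ) :=
  ringKrullDim (MvPolynomial (Fin n) ℝ ⧸ MvPolynomial.vanishingIdeal ℝ S)

/-- `C` is an irreducible component of `W`: irreducible Zariski closed subset of `W`,
maximal among such. -/
def IsIrredComponent {n : ℕ} (W C : Set (Fin n → ℂ)) : Prop :=
  IsZClosed C ∧ (MvPolynomial.vanishingIdeal ℂ C).IsPrime ∧ C ⊆ W ∧
    ∀ C' : Set (Fin n → ℂ), IsZClosed C' → (MvPolynomial.vanishingIdeal ℂ C').IsPrime →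
      C ⊆ C' → C' ⊆ W → C' = C

/-- Rank at `x` of the Jacobian matrix of the family of polynomials `g`. -/
noncomputable def jrank {n k : ℕ} (g : Fin k → MvPolynomial (Fin n) ℂ) (x : Fin n → ℂ) : ℕ :=
  (Matrix.of fun (j : Fin k) (l : Fin n) =>
    MvPolynomial.eval x (MvPolynomial.pderiv l (g j))).rank

/-- `x` is a smooth point of the `r`-dimensional variety `C`: there are `n - r` polynomials
vanishing on `C` whose Jacobian at `x` has rank `n - r`. -/
def IsSmoothPtOf {n : ℕ} (C : Set (Fin n → ℂ)) (r : ℕ) (x : Fin n → ℂ) : Prop :=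
  x ∈ C ∧ ∃ g : Fin (n - r) → MvPolynomial (Fin n) ℂ,
    (∀ j, g j ∈ MvPolynomial.vanishingIdeal ℂ C) ∧ jrank g x = n - r

/-- The canonical inclusion ℝⁿ → ℂⁿ. -/
def cx {n : ℕ} (x : Fin n → ℝ) : Fin n → ℂ := fun j => (x j : ℂ)

/-- An irreducible component of `W` is real if it contains a real point which is a
smooth point of it. -/
def IsRealComponent {n : ℕ} (W C : Set (Fin n → ℂ)) : Prop :=
  IsIrredComponent W C ∧ ∃ (r : ℕ) (x : Fin n → ℝ),
    cDim C = (r : WithBot (WithTop ℕ)) ∧ IsSmoothPtOf C r (cx x)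

/-- Geometric degree of an irreducible variety: the maximal (finite, nonzero) number of
points cut out on `C` by an affine-linear subspace of complementary dimension. -/
noncomputable def gDeg {n : ℕ} (C : Set (Fin n → ℂ)) : ℕ :=
  sSup {m : ℕ | ∃ (r : ℕ) (L : Fin r → MvPolynomial (Fin n) ℂ),
    cDim C = (r : WithBot (WithTop ℕ)) ∧ (∀ j, (L j).totalDegree ≤ 1) ∧
    (C ∩ {x | ∀ j, MvPolynomial.eval x (L j) = 0}).Finite ∧
    (C ∩ {x | ∀ j, MvPolynomial.eval x (L j) = 0}).Nonempty ∧
    m = (C ∩ {x | ∀ j, MvPolynomial.eval x (L j) = 0}).ncard}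

/-
Each connected component `K` of the compact hypersurface `V = {f = 0}` is compact, so the last
coordinate attains a maximum on `K` at some `y`. Near a regular point the implicit function theorem
identifies `V` with a convex set, so `K` is a neighbourhood of `y` in `V` and `y` is a local
maximum of `xₙ` on `V`. By Lagrange multipliers all partials of `f` but the last vanish at `y`;
the last does not since `∇f(y) ≠ 0`, so `Δ(y) ≠ 0` and `y` is a real point of `W_{n-1}`.
-/

open Topology

lemma IsCompact.connectedComponentIn {α : Type*} [TopologicalSpace α] {F : Set α}
    (hF : IsCompact F) (x : α) : IsCompact (connectedComponentIn F x) := by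
  by_cases hx : x ∈ F
  · rw [connectedComponentIn_eq_image hx]
    have := isCompact_iff_compactSpace.mp hF
    exact isClosed_connectedComponent.isCompact.image continuous_subtype_val
  · rw [connectedComponentIn_eq_empty hx]
    exact isCompact_empty

section ImplicitFunction

variable {E F : Type*} [NormedAddCommGroup E] [NormedSpace ℝ E] [CompleteSpace E]
  [NormedAddCommGroup F] [NormedSpace ℝ F] [FiniteDimensional ℝ F]

theorem HasStrictFDerivAt.connectedComponentIn_mem_nhdsWithin {f : E → F} {f' : E →L[ℝ] F} {a : E}
    (hf : HasStrictFDerivAt f f' a) (hf' : f'.range = ⊤) :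
    connectedComponentIn {x | f x = f a} a ∈ 𝓝[{x | f x = f a}] a := by
  -- In the implicit-function chart `h`, the level set near `a` is a slice of a ball.
  set h := hf.implicitToOpenPartialHomeomorph f f' hf'
  have ha : a ∈ h.source := hf.mem_implicitToOpenPartialHomeomorph_source hf'
  obtain ⟨ε, hε, hball⟩ := Metric.isOpen_iff.1 h.open_target _ (h.map_source ha)
  set S := Metric.ball (h a) ε ∩ {p | p.1 = f a}
  have hS : Convex ℝ S :=
    (convex_ball _ _).inter ((convex_singleton (f a)).linear_preimage (LinearMap.fst ℝ F _))
  have hSt : S ⊆ h.target := fun p hp => hball hp.1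
  have hfst : ∀ x, (h x).1 = f x := hf.implicitToOpenPartialHomeomorph_fst hf'
  have hpre : IsPreconnected (h.symm '' S) :=
    hS.isPreconnected.image _ (h.continuousOn_symm.mono hSt)
  have hlevel : h.symm '' S ⊆ {x | f x = f a} := by
    rintro _ ⟨p, hp, rfl⟩
    rw [Set.mem_ofPred_eq, ← hfst, h.right_inv (hSt hp)]
    exact hp.2
  have hmem : ∀ x ∈ h.source, h x ∈ Metric.ball (h a) ε → f x = f a → x ∈ h.symm '' S :=
    fun x hx hxε hxf => ⟨h x, ⟨hxε, (hfst x).trans hxf⟩, h.left_inv hx⟩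
  filter_upwards [nhdsWithin_le_nhds ((h.isOpen_inter_preimage Metric.isOpen_ball).mem_nhds
    ⟨ha, Metric.mem_ball_self hε⟩), self_mem_nhdsWithin] with x ⟨hx, hxε⟩ hxf
  exact hpre.subset_connectedComponentIn (hmem a ha (Metric.mem_ball_self hε) rfl) hlevel
    (hmem x hx hxε hxf)

end ImplicitFunction

namespace MvPolynomial

variable {σ : Type*} [Fintype σ] [DecidableEq σ]

noncomputable def fderivEval (p : MvPolynomial σ ℝ) (y : σ → ℝ) : (σ → ℝ) →L[ℝ] ℝ :=
  ∑ j, eval y (pderiv j p) • ContinuousLinearMap.proj (R := ℝ) (φ := fun _ : σ => ℝ) j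

@[simp]
theorem fderivEval_single (p : MvPolynomial σ ℝ) (y : σ → ℝ) (k : σ) :
    fderivEval p y (Pi.single k 1) = eval y (pderiv k p) := by
  simp [fderivEval, Pi.single_apply]

theorem hasStrictFDerivAt_eval (p : MvPolynomial σ ℝ) (y : σ → ℝ) :
    HasStrictFDerivAt (fun x => eval x p) (fderivEval p y) y := by
  unfold fderivEval
  induction p using MvPolynomial.induction_on with
  | C a =>
    simpa using hasStrictFDerivAt_const a y
  | add p q hp hq =>
    simp only [map_add, add_smul, Finset.sum_add_distrib]
    exact hp.add hq
  | mul_X p i hp =>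
    set π := ContinuousLinearMap.proj (R := ℝ) (φ := fun _ : σ => ℝ)
    have hpderiv : ∀ j, eval y (pderiv j (p * X i)) =
        eval y (pderiv j p) * y i + if j = i then eval y p else 0 := by
      intro j
      rcases eq_or_ne j i with rfl | hji
      · simp [add_comm, mul_comm]
      · simp [hji, mul_comm]
    have hderiv : ∑ j, eval y (pderiv j (p * X i)) • π j =
        eval y p • π i + y i • ∑ j, eval y (pderiv j p) • π j := by
      simp only [hpderiv, add_smul, Finset.sum_add_distrib, Finset.smul_sum, smul_smul,
        mul_comm (y i), ite_smul, zero_smul, Finset.sum_ite_eq', Finset.mem_univ, if_true]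
      rw [add_comm]
    simp only [eval_mul, eval_X]
    rw [hderiv]
    exact hp.mul (π i).hasStrictFDerivAt

theorem eval_pderiv_eq_zero_of_isLocalExtrOn {p : MvPolynomial σ ℝ} {y : σ → ℝ} {i j : σ}
    (hextr : IsLocalExtrOn (fun z => z i) {z | eval z p = eval y p} y) (hji : j ≠ i) :
    eval y (pderiv j p) = 0 := by
  obtain ⟨a, b, hab, heq⟩ := hextr.exists_multipliers_of_hasStrictFDerivAt_1d
    (hasStrictFDerivAt_eval p y)
    (ContinuousLinearMap.proj (R := ℝ) (φ := fun _ : σ => ℝ) i).hasStrictFDerivAt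
  have happ : ∀ l, a * eval y (pderiv l p) + b * Pi.single (M := fun _ => ℝ) l 1 i = 0 := by
    intro l
    simpa using congrArg (· (Pi.single l 1)) heq
  have ha : a ≠ 0 := by
    rintro rfl
    exact hab (by simpa using happ i)
  simpa [ha, Pi.single_apply, hji.symm] using happ j

theorem exists_mem_connectedComponentIn_pderiv_eq_zero {p : MvPolynomial σ ℝ}
    (hcpt : IsCompact {x | eval x p = 0})
    (hreg : ∀ x, eval x p = 0 → ∃ j, eval x (pderiv j p) ≠ 0) (i : σ) {x : σ → ℝ}
    (hx : eval x p = 0) :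
    ∃ y ∈ connectedComponentIn {x | eval x p = 0} x,
      (∀ j ≠ i, eval y (pderiv j p) = 0) ∧ eval y (pderiv i p) ≠ 0 := by
  obtain ⟨y, hyK, hymax⟩ := (hcpt.connectedComponentIn x).exists_isMaxOn
    ⟨x, mem_connectedComponentIn hx⟩ (continuous_apply i).continuousOn
  have hy : eval y p = 0 := connectedComponentIn_subset {x | eval x p = 0} x hyK
  obtain ⟨k, hk⟩ := hreg y hy
  have hsurj : (fderivEval p y).range = ⊤ := by
    refine Module.Dual.range_eq_top_of_ne_zero fun h => hk ?_
    simpa using LinearMap.congr_fun h (Pi.single k 1)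
  have hmax : IsLocalMaxOn (fun z => z i) {z | eval z p = eval y p} y := by
    filter_upwards [(hasStrictFDerivAt_eval p y).connectedComponentIn_mem_nhdsWithin hsurj]
      with z hz
    rw [hy, ← connectedComponentIn_eq hyK] at hz
    exact hymax hz
  have hcrit : ∀ j ≠ i, eval y (pderiv j p) = 0 :=
    fun j hji => eval_pderiv_eq_zero_of_isLocalExtrOn (.inr hmax) hji
  refine ⟨y, hyK, hcrit, fun hi => hk ?_⟩
  obtain rfl | hki := eq_or_ne k i
  exacts [hi, hcrit k hki]

end MvPolynomial

open MvPolynomial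

theorem eval_cx_map_algebraMap {n : ℕ} (x : Fin n → ℝ) (p : MvPolynomial (Fin n) ℝ) :
    eval (cx x) (map (algebraMap ℝ ℂ) p) = eval x p := by
  rw [eval_map]
  exact (eval₂_comp_left (algebraMap ℝ ℂ) (RingHom.id ℝ) x p).symm

theorem stmt16_general (n : ℕ) (f : MvPolynomial (Fin (n + 1)) ℝ)
    (Δ : MvPolynomial (Fin (n + 1)) ℝ)
    (hΔ : Δ = ∑ j : Fin (n + 1), (MvPolynomial.pderiv j f) ^ 2)
    (V : Set (Fin (n + 1) → ℝ)) (hV : V = {x | MvPolynomial.eval x f = 0})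
    (hne : V.Nonempty) (hcpt : IsCompact V)
    (hreg : ∀ x ∈ V, ∃ j, MvPolynomial.eval x (MvPolynomial.pderiv j f) ≠ 0)
    (fC ΔC : MvPolynomial (Fin (n + 1)) ℂ)
    (hfC : fC = MvPolynomial.map (algebraMap ℝ ℂ) f)
    (hΔC : ΔC = MvPolynomial.map (algebraMap ℝ ℂ) Δ)
    (Wn : Set (Fin (n + 1) → ℂ))
    (hWn : Wn = zClosure {z | MvPolynomial.eval z fC = 0 ∧
      (∀ j : Fin (n + 1), j ≠ Fin.last n →
        MvPolynomial.eval z (MvPolynomial.pderiv j fC) = 0) ∧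
      MvPolynomial.eval z ΔC ≠ 0}) :
    (Wn ∩ Set.range (cx (n := n + 1))).Nonempty ∧
    ∀ x ∈ V, ∃ y ∈ connectedComponentIn V x, cx y ∈ Wn := by
  subst hV hΔ hfC hΔC
  have hpolar : ∀ y, eval y f = 0 → (∀ j ≠ Fin.last n, eval y (pderiv j f) = 0) →
      eval y (pderiv (Fin.last n) f) ≠ 0 → cx y ∈ Wn := by
    intro y hy hcrit hlast
    rw [hWn]
    refine zeroLocus_vanishingIdeal_le _ ⟨?_, fun j hj => ?_, ?_⟩
    · rw [eval_cx_map_algebraMap, hy, Complex.ofReal_zero]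
    · rw [pderiv_map, eval_cx_map_algebraMap, hcrit j hj, Complex.ofReal_zero]
    · rw [eval_cx_map_algebraMap, Complex.ofReal_ne_zero, map_sum]
      refine (Finset.sum_pos' (fun j _ => ?_) ⟨Fin.last n, Finset.mem_univ _, ?_⟩).ne'
      all_goals simp only [map_pow]; positivity
  have hcomp : ∀ x ∈ {x | eval x f = 0}, ∃ y ∈ connectedComponentIn {x | eval x f = 0} x,
      cx y ∈ Wn := fun x hx => by
    obtain ⟨y, hyK, hcrit, hlast⟩ :=
      exists_mem_connectedComponentIn_pderiv_eq_zero hcpt hreg (Fin.last n) hx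
    exact ⟨y, hyK, hpolar y (connectedComponentIn_subset {x | eval x f = 0} x hyK) hcrit hlast⟩
  obtain ⟨x, hx⟩ := hne
  obtain ⟨y, -, hy⟩ := hcomp x hx
  exact ⟨⟨cx y, hy, y, rfl⟩, hcomp⟩

/-- Geometric core of Theorem 8: if the smallest polar variety `W_{n-1}` (over ℂ, in
`n + 1` variables, cut out by `f` and all partial derivatives but the last, away from
`Δ = 0`) is finite, then its real points are nonempty and meet every connected component
of the compact smooth hypersurface `V = {f = 0} ⊆ ℝ^(n+1)`. -/
theorem stmt16 (n : ℕ) (f : MvPolynomial (Fin (n + 1)) ℝ)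
    (Δ : MvPolynomial (Fin (n + 1)) ℝ)
    (hΔ : Δ = ∑ j : Fin (n + 1), (MvPolynomial.pderiv j f) ^ 2)
    (V : Set (Fin (n + 1) → ℝ)) (hV : V = {x | MvPolynomial.eval x f = 0})
    (hne : V.Nonempty) (hcpt : IsCompact V)
    (hreg : ∀ x ∈ V, ∃ j, MvPolynomial.eval x (MvPolynomial.pderiv j f) ≠ 0)
    (fC ΔC : MvPolynomial (Fin (n + 1)) ℂ)
    (hfC : fC = MvPolynomial.map (algebraMap ℝ ℂ) f)
    (hΔC : ΔC = MvPolynomial.map (algebraMap ℝ ℂ) Δ)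
    (Wn : Set (Fin (n + 1) → ℂ))
    (hWn : Wn = zClosure {z | MvPolynomial.eval z fC = 0 ∧
      (∀ j : Fin (n + 1), j ≠ Fin.last n →
        MvPolynomial.eval z (MvPolynomial.pderiv j fC) = 0) ∧
      MvPolynomial.eval z ΔC ≠ 0})
    (hfin : Wn.Finite) :
    (Wn ∩ Set.range (cx (n := n + 1))).Nonempty ∧
    ∀ x ∈ V, ∃ y ∈ connectedComponentIn V x, cx y ∈ Wn :=
  stmt16_general n f Δ hΔ V hV hne hcpt hreg fC ΔC hfC hΔC Wn hWn
end
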